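/- Let A and B be closed sets, T the Douglas–Rachford operator, δ > 0, ε₁, ε₂ ∈ [0,1/4), and w ∈ A ∩ B. Assume A is (ε₁,2δ)-regular at w and B is (ε₂,3δ)-regular at w. Set Ω := A ∩ B and γ := (1 + (1+2ε₁)²(1+2ε₂)²)/2. Then for all x ∈ B_δ(w), all x₊ ∈ T(x), and all x̄ ∈ Ω ∩ B_{2δ}(w): ‖x − x₊‖² + ‖x₊ − x̄‖² ≤ γ‖x − x̄‖². -/

import Mathlib

open Metric Filter
open scoped Topology

variable {X : Type*} [NormedAddCommGroup X] [InnerProductSpace ℝ X] [FiniteDimensional ℝ X]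

/-- Set-valued metric projection onto `C`. -/
def projSet (C : Set X) (x : X) : Set X := {a | a ∈ C ∧ ∀ c ∈ C, ‖x - a‖ ≤ ‖x - c‖}

/-- Set-valued reflector `R_C = 2 P_C - Id`. -/
def reflSet (C : Set X) (x : X) : Set X := {z | ∃ a ∈ projSet C x, z = (2:ℝ) • a - x}

/-- Set-valued Douglas–Rachford operator `T(x) = {P_B(2a-x)+x-a : a ∈ P_A x}`. -/
def DRop (A B : Set X) (x : X) : Set X :=
  {y | ∃ a ∈ projSet A x, ∃ b ∈ projSet B ((2:ℝ) • a - x), y = b + x - a}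

/-- Proximal normal cone `N^P_C(x) = cone (P_C⁻¹ x - x)`. -/
def proxNormalCone (C : Set X) (x : X) : Set X :=
  {u | ∃ t : ℝ, 0 ≤ t ∧ ∃ z : X, x ∈ projSet C z ∧ u = t • (z - x)}

/-- Mordukhovich (limiting) normal cone. -/
def limNormalCone (C : Set X) (w : X) : Set X :=
  {u | ∃ xs us : ℕ → X, (∀ n, xs n ∈ C) ∧ (∀ n, us n ∈ proxNormalCone C (xs n)) ∧
      Tendsto xs atTop (𝓝 w) ∧ Tendsto us atTop (𝓝 u)}

/-- `(ε,δ)`-regularity of `C` at `w`. -/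
def regAt (C : Set X) (w : X) (ε δ : ℝ) : Prop :=
  ∀ x ∈ C ∩ closedBall w δ, ∀ z ∈ C ∩ closedBall w δ, ∀ u ∈ proxNormalCone C x,
    (inner ℝ u (z - x) : ℝ) ≤ ε * ‖u‖ * ‖z - x‖

/-- Superregularity of `C` at `w`. -/
def superregAt (C : Set X) (w : X) : Prop := ∀ ε > 0, ∃ δ > 0, regAt C w ε δ

/-- The quantity `θ̄(N₁,N₂) = sup {⟨u,v⟩ : u ∈ N₁ ∩ 𝔹, v ∈ (-N₂) ∩ 𝔹}`. -/
noncomputable def thetaBar (N₁ N₂ : Set X) : ℝ :=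
  sSup {r : ℝ | ∃ u ∈ N₁, ∃ v ∈ -N₂, ‖u‖ ≤ 1 ∧ ‖v‖ ≤ 1 ∧ r = (inner ℝ u v : ℝ)}

/-!
Write `a ∈ P_A x`, `y = 2a - x` and `b ∈ P_B y`, so that `x₊ = b + x - a`. Expanding squares,
`‖x - x₊‖² + ‖x₊ - x̄‖² = ‖x - x̄‖² + 2⟪x - a, x̄ - a⟫ + 2⟪y - b, x̄ - b⟫`, and each inner product
pairs a proximal normal with a chord of the set, so regularity bounds it by `ε‖p - c‖‖z - c‖`.
For a projection `c ∈ P_C p` with this bound one gets `‖z - c‖ ≤ (1 + ε)‖p - z‖` and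
`‖(2c - p) - z‖ ≤ (1 + 2ε)‖p - z‖`. This bounds the first inner product by `ε₁(1 + ε₁)‖x - x̄‖²`
and, since `‖y - x̄‖ ≤ (1 + 2ε₁)‖x - x̄‖`, the second by `ε₂(1 + ε₂)(1 + 2ε₁)²‖x - x̄‖²`; these
add up to `γ` exactly. The radii `2δ` and `3δ` keep `a` and `b` inside the regularity balls:
`‖a - w‖ ≤ 2‖x - w‖ ≤ 2δ` and `‖b - w‖ ≤ 2‖y - w‖ ≤ 2(1 + 2ε₁)δ ≤ 3δ`.
-/

open scoped RealInnerProductSpace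

section

variable {E : Type*} [NormedAddCommGroup E]

theorem norm_sub_le_two_mul_of_mem_projSet {C : Set E} {x a w : E} (ha : a ∈ projSet C x)
    (hw : w ∈ C) : ‖a - w‖ ≤ 2 * ‖x - w‖ :=
  calc ‖a - w‖ ≤ ‖a - x‖ + ‖x - w‖ := norm_sub_le_norm_sub_add_norm_sub a x w
    _ ≤ 2 * ‖x - w‖ := by rw [norm_sub_rev a x]; linarith [ha.2 w hw]

variable [InnerProductSpace ℝ E]

theorem norm_sub_add_norm_sub_douglasRachford_eq (x a b z : E) :
    ‖x - (b + x - a)‖ ^ 2 + ‖b + x - a - z‖ ^ 2 =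
      ‖x - z‖ ^ 2 + 2 * (⟪x - a, z - a⟫ + ⟪(2 : ℝ) • a - x - b, z - b⟫) := by
  simp only [← real_inner_self_eq_norm_sq, inner_sub_left, inner_sub_right, inner_add_left,
    inner_add_right, real_inner_smul_left, real_inner_comm x a,
    real_inner_comm x b, real_inner_comm x z, real_inner_comm a b, real_inner_comm a z,
    real_inner_comm b z]
  ring

variable {ε : ℝ} {p c z : E}

theorem norm_sub_le_one_add_mul_of_inner_le (hε₀ : 0 ≤ ε) (hε₁ : ε ≤ 1)
    (hpc : ‖p - c‖ ≤ ‖p - z‖) (hI : ⟪p - c, z - c⟫ ≤ ε * ‖p - c‖ * ‖z - c‖) :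
    ‖z - c‖ ≤ (1 + ε) * ‖p - z‖ := by
  have hsq : ‖p - z‖ ^ 2 = ‖p - c‖ ^ 2 - 2 * ⟪p - c, z - c⟫ + ‖z - c‖ ^ 2 := by
    rw [← norm_sub_sq_real, sub_sub_sub_cancel_right]
  -- `(‖z - c‖ - ε‖p - c‖)² ≤ ‖p - z‖² - (1 - ε²)‖p - c‖² ≤ ‖p - z‖²`
  have hshift : ‖z - c‖ ≤ ε * ‖p - c‖ + ‖p - z‖ := by
    have hr : 0 ≤ (1 - ε) * (1 + ε) * ‖p - c‖ ^ 2 := by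
      have : 0 ≤ 1 - ε := by linarith
      positivity
    nlinarith [norm_nonneg (p - z), sq_nonneg (‖z - c‖ - ε * ‖p - c‖ - ‖p - z‖),
      sq_nonneg (‖z - c‖ - ε * ‖p - c‖ + ‖p - z‖)]
  nlinarith [mul_le_mul_of_nonneg_left hpc hε₀]

theorem inner_le_mul_norm_sq_of_inner_le (hε₀ : 0 ≤ ε) (hε₁ : ε ≤ 1)
    (hpc : ‖p - c‖ ≤ ‖p - z‖) (hI : ⟪p - c, z - c⟫ ≤ ε * ‖p - c‖ * ‖z - c‖) :
    ⟪p - c, z - c⟫ ≤ ε * (1 + ε) * ‖p - z‖ ^ 2 :=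
  calc ⟪p - c, z - c⟫ ≤ ε * ‖p - c‖ * ‖z - c‖ := hI
    _ ≤ ε * ‖p - z‖ * ((1 + ε) * ‖p - z‖) := by
      gcongr
      exact norm_sub_le_one_add_mul_of_inner_le hε₀ hε₁ hpc hI
    _ = ε * (1 + ε) * ‖p - z‖ ^ 2 := by ring

theorem norm_reflection_sub_le_of_inner_le (hε₀ : 0 ≤ ε) (hε₁ : ε ≤ 1)
    (hpc : ‖p - c‖ ≤ ‖p - z‖) (hI : ⟪p - c, z - c⟫ ≤ ε * ‖p - c‖ * ‖z - c‖) :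
    ‖(2 : ℝ) • c - p - z‖ ≤ (1 + 2 * ε) * ‖p - z‖ := by
  have hsq : ‖(2 : ℝ) • c - p - z‖ ^ 2 = ‖p - z‖ ^ 2 + 4 * ⟪p - c, z - c⟫ := by
    simp only [← real_inner_self_eq_norm_sq, inner_sub_left, inner_sub_right,
      real_inner_smul_left, real_inner_smul_right, real_inner_comm p c, real_inner_comm p z,
      real_inner_comm c z]
    ring
  have hbound := inner_le_mul_norm_sq_of_inner_le hε₀ hε₁ hpc hI
  refine le_of_sq_le_sq ?_ (by positivity)
  rw [hsq]
  linear_combination 4 * hbound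

theorem sub_mem_proxNormalCone_of_mem_projSet {C : Set E} {p c : E} (hc : c ∈ projSet C p) :
    p - c ∈ proxNormalCone C c :=
  ⟨1, zero_le_one, p, hc, (one_smul ℝ _).symm⟩

theorem regAt.inner_le_of_mem_projSet {C : Set E} {w p c z : E} {ε δ : ℝ}
    (hreg : regAt C w ε δ) (hc : c ∈ projSet C p) (hcw : c ∈ closedBall w δ) (hz : z ∈ C)
    (hzw : z ∈ closedBall w δ) : ⟪p - c, z - c⟫ ≤ ε * ‖p - c‖ * ‖z - c‖ :=
  hreg c ⟨hc.1, hcw⟩ z ⟨hz, hzw⟩ _ (sub_mem_proxNormalCone_of_mem_projSet hc)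

end

theorem DR_quasi_firm_estimate_general
    (A B : Set X)
    (w : X) (hw : w ∈ A ∩ B)
    (δ ε₁ ε₂ : ℝ)
    (hε₁ : ε₁ ∈ Set.Ico (0:ℝ) (1 / 4)) (hε₂ : ε₂ ∈ Set.Ico (0:ℝ) (1 / 4))
    (hregA : regAt A w ε₁ (2 * δ)) (hregB : regAt B w ε₂ (3 * δ))
    (x : X) (hx : x ∈ closedBall w δ) (xplus : X) (hxplus : xplus ∈ DRop A B x)
    (xbar : X) (hxbar : xbar ∈ (A ∩ B) ∩ closedBall w (2 * δ)) :
    ‖x - xplus‖ ^ 2 + ‖xplus - xbar‖ ^ 2 ≤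
      (1 + (1 + 2 * ε₁) ^ 2 * (1 + 2 * ε₂) ^ 2) / 2 * ‖x - xbar‖ ^ 2 := by
  obtain ⟨a, ha, b, hb, rfl⟩ := hxplus
  obtain ⟨⟨hxbarA, hxbarB⟩, hxbar⟩ := hxbar
  obtain ⟨hε₁₀, hε₁₁⟩ := hε₁
  obtain ⟨hε₂₀, hε₂₁⟩ := hε₂
  have hxw : ‖x - w‖ ≤ δ := mem_closedBall_iff_norm.mp hx
  have hδ : 0 ≤ δ := (norm_nonneg _).trans hxw
  have ha_ball : a ∈ closedBall w (2 * δ) := mem_closedBall_iff_norm.mpr <|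
    (norm_sub_le_two_mul_of_mem_projSet ha hw.1).trans (by linarith)
  have hIA := hregA.inner_le_of_mem_projSet ha ha_ball hxbarA hxbar
  have hyw : ‖(2 : ℝ) • a - x - w‖ ≤ (1 + 2 * ε₁) * ‖x - w‖ :=
    norm_reflection_sub_le_of_inner_le hε₁₀ (by linarith) (ha.2 w hw.1) <|
      hregA.inner_le_of_mem_projSet ha ha_ball hw.1 (mem_closedBall_self (by positivity))
  have hb_ball : b ∈ closedBall w (3 * δ) := mem_closedBall_iff_norm.mpr <|
    calc ‖b - w‖ ≤ 2 * ‖(2 : ℝ) • a - x - w‖ := norm_sub_le_two_mul_of_mem_projSet hb hw.2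
      _ ≤ 2 * ((1 + 2 * ε₁) * δ) := by gcongr; exact hyw.trans (by gcongr)
      _ ≤ 3 * δ := by nlinarith
  have hIB := hregB.inner_le_of_mem_projSet hb hb_ball hxbarB
    (closedBall_subset_closedBall (by linarith) hxbar)
  have hA := inner_le_mul_norm_sq_of_inner_le hε₁₀ (by linarith) (ha.2 xbar hxbarA) hIA
  have hB := inner_le_mul_norm_sq_of_inner_le hε₂₀ (by linarith) (hb.2 xbar hxbarB) hIB
  have hy_xbar : ‖(2 : ℝ) • a - x - xbar‖ ≤ (1 + 2 * ε₁) * ‖x - xbar‖ :=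
    norm_reflection_sub_le_of_inner_le hε₁₀ (by linarith) (ha.2 xbar hxbarA) hIA
  have hB' :
      ⟪(2 : ℝ) • a - x - b, xbar - b⟫ ≤ ε₂ * (1 + ε₂) * ((1 + 2 * ε₁) * ‖x - xbar‖) ^ 2 :=
    hB.trans (by gcongr)
  rw [norm_sub_add_norm_sub_douglasRachford_eq]
  linear_combination 2 * hA + 2 * hB'

theorem DR_quasi_firm_estimate
    (A B : Set X) (hA : IsClosed A) (hB : IsClosed B)
    (w : X) (hw : w ∈ A ∩ B)
    (δ ε₁ ε₂ : ℝ) (hδ : 0 < δ)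
    (hε₁ : ε₁ ∈ Set.Ico (0:ℝ) (1 / 4)) (hε₂ : ε₂ ∈ Set.Ico (0:ℝ) (1 / 4))
    (hregA : regAt A w ε₁ (2 * δ)) (hregB : regAt B w ε₂ (3 * δ))
    (x : X) (hx : x ∈ closedBall w δ) (xplus : X) (hxplus : xplus ∈ DRop A B x)
    (xbar : X) (hxbar : xbar ∈ (A ∩ B) ∩ closedBall w (2 * δ)) :
    ‖x - xplus‖ ^ 2 + ‖xplus - xbar‖ ^ 2 ≤
      (1 + (1 + 2 * ε₁) ^ 2 * (1 + 2 * ε₂) ^ 2) / 2 * ‖x - xbar‖ ^ 2 :=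
  DR_quasi_firm_estimate_general A B w hw δ ε₁ ε₂ hε₁ hε₂ hregA hregB x hx xplus hxplus xbar hxbar
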